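/- arXiv:0802.1406 — 3 statements merged into one kernel-verified Lean document; each statement's English description precedes it below -/
import Mathlib

section
/- Let H be a finite set of hypotheses, p = (p_h)_{h∈H} a family of independent [0,1]-valued random variables with P(p_h ≤ t) ≤ t for all t ∈ [0,1] and all h ∈ H₀. Let R(p) be a multiple testing procedure such that |R(p)| (the Λ-volume of the rejection set) is nonincreasing in each coordinate p_h with h ∈ H₀. Then for every h ∈ H₀ and every c > 0, E[ 1_{p_h ≤ c |R(p)|} / |R(p)| ] ≤ c. -/
open MeasureTheory ProbabilityTheory ENNReal Set Finset

/-!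
Fix the p-values other than `p_h`. By independence the joint law is the product of the marginals,
so by Fubini it suffices to bound, for the law `ν` of `p_h` and the nonincreasing function
`g(t) = |R(p)|` of `t = p_h`, the integral `∫ 1{t ≤ c g(t), g(t) > 0} / g(t) dν(t)`.
If `s` is the supremum of `S = {t | t ≤ c g(t), g(t) > 0}`, then monotonicity of `g` gives
`s ≤ c g(t)` for every `t ∈ S`; so the integrand is at most `c / s` on `S`, while super-uniformity
gives `ν S ≤ ν (-∞, s] ≤ s`.
-/

def IsSuperUniform (ν : Measure ℝ) : Prop :=
  ∀ t, ν (Iic t) ≤ ENNReal.ofReal t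

namespace IsSuperUniform

variable {ν : Measure ℝ}

theorem of_le_on_unitInterval [IsZeroOrProbabilityMeasure ν]
    (h : ∀ t : ℝ, 0 ≤ t → t ≤ 1 → ν (Iic t) ≤ ENNReal.ofReal t) : IsSuperUniform ν := by
  intro t
  rcases lt_or_ge t 0 with ht0 | ht0
  · calc ν (Iic t) ≤ ν (Iic 0) := measure_mono (Iic_subset_Iic.2 ht0.le)
      _ ≤ ENNReal.ofReal 0 := h 0 le_rfl zero_le_one
      _ ≤ ENNReal.ofReal t := ENNReal.ofReal_le_ofReal_iff'.2 (Or.inr le_rfl)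
  rcases le_or_gt t 1 with ht1 | ht1
  · exact h t ht0 ht1
  · calc ν (Iic t) ≤ 1 := prob_le_one
      _ ≤ ENNReal.ofReal t := by rw [← ENNReal.ofReal_one]; exact ENNReal.ofReal_le_ofReal ht1.le

theorem measure_Iic_zero (hν : IsSuperUniform ν) : ν (Iic 0) = 0 := by
  simpa using hν 0

theorem setLIntegral_inv_le (hν : IsSuperUniform ν) {g : ℝ → ℝ} (hg : Antitone g) (c : ℝ) :
    ∫⁻ t in {t | t ≤ c * g t ∧ 0 < g t}, ENNReal.ofReal (g t)⁻¹ ∂ν ≤ ENNReal.ofReal c := by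
  set S := {t | t ≤ c * g t ∧ 0 < g t}
  by_cases hS : ν S = 0
  · simp [setLIntegral_measure_zero _ _ hS]
  obtain ⟨t₀, ht₀S, ht₀⟩ : ∃ t₀ ∈ S, 0 < t₀ := by
    by_contra! hle
    exact hS (measure_mono_null hle hν.measure_Iic_zero)
  have hc : 0 < c := pos_of_mul_pos_left (ht₀.trans_le ht₀S.1) ht₀S.2.le
  have hbound : ∀ t ∈ S, ∀ s ∈ S, s ≤ c * g t := by
    intro t ht s hs
    rcases le_total s t with hst | hts
    · exact hst.trans ht.1
    · exact hs.1.trans (mul_le_mul_of_nonneg_left (hg hts) hc.le)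
  have hbdd : BddAbove S := ⟨c * g t₀, hbound t₀ ht₀S⟩
  set s := sSup S
  have hs : 0 < s := ht₀.trans_le (le_csSup hbdd ht₀S)
  have hinv : ∀ t ∈ S, ENNReal.ofReal (g t)⁻¹ ≤ ENNReal.ofReal (c / s) := by
    intro t ht
    refine ENNReal.ofReal_le_ofReal ?_
    rw [← inv_div]
    exact inv_anti₀ (div_pos hs hc) ((div_le_iff₀' hc).2 (csSup_le ⟨t₀, ht₀S⟩ (hbound t ht)))
  calc ∫⁻ t in S, ENNReal.ofReal (g t)⁻¹ ∂ν
      ≤ ∫⁻ _ in S, ENNReal.ofReal (c / s) ∂ν := setLIntegral_mono measurable_const hinv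
    _ = ENNReal.ofReal (c / s) * ν S := setLIntegral_const _ _
    _ ≤ ENNReal.ofReal (c / s) * ENNReal.ofReal s :=
        mul_le_mul_right ((measure_mono fun t ht => le_csSup hbdd ht).trans (hν s)) _
    _ = ENNReal.ofReal c := by
        rw [← ENNReal.ofReal_mul (div_pos hc hs).le, div_mul_cancel₀ _ hs.ne']

end IsSuperUniform

theorem lintegral_pi_le_of_forall_lintegral_update_le {ι : Type*} [Fintype ι] [DecidableEq ι]
    {X : ι → Type*} [∀ i, MeasurableSpace (X i)] (μ : ∀ i, Measure (X i))
    [∀ i, IsProbabilityMeasure (μ i)] {f : (∀ i, X i) → ℝ≥0∞} (hf : Measurable f) (i : ι)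
    {C : ℝ≥0∞} (hC : ∀ x, ∫⁻ t, f (Function.update x i t) ∂μ i ≤ C) :
    ∫⁻ x, f x ∂Measure.pi μ ≤ C :=
  calc ∫⁻ x, f x ∂Measure.pi μ ≤ ∫⁻ _, C ∂Measure.pi μ :=
        lintegral_le_of_lmarginal_le {i} hf measurable_const fun x => by
          simpa [lmarginal_singleton] using hC x
    _ = C := by simp

theorem ProbabilityTheory.iIndepFun.lintegral_comp_le_of_forall_lintegral_update_le
    {Ω ι : Type*} [MeasurableSpace Ω] {P : Measure Ω} [Fintype ι] [DecidableEq ι]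
    {β : ι → Type*} [∀ i, MeasurableSpace (β i)] {X : ∀ i, Ω → β i} (hX : ∀ i, Measurable (X i))
    (hindep : iIndepFun X P) {f : (∀ i, β i) → ℝ≥0∞} (hf : Measurable f) (i : ι) {C : ℝ≥0∞}
    (hC : ∀ x, ∫⁻ t, f (Function.update x i t) ∂P.map (X i) ≤ C) :
    ∫⁻ ω, f (fun j => X j ω) ∂P ≤ C := by
  have := hindep.isProbabilityMeasure
  have (j : ι) : IsProbabilityMeasure (P.map (X j)) :=
    Measure.isProbabilityMeasure_map (hX j).aemeasurable
  rw [← lintegral_map hf (measurable_pi_lambda _ hX),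
    hindep.map_fun_eq_pi_map fun j => (hX j).aemeasurable]
  exact lintegral_pi_le_of_forall_lintegral_update_le _ hf i hC

theorem measurable_sum_of_measurableSet_mem {α ι M : Type*} [MeasurableSpace α] [Fintype ι]
    [AddCommMonoid M] [MeasurableSpace M] [MeasurableAdd₂ M] {R : α → Finset ι}
    (hR : ∀ i, MeasurableSet {a | i ∈ R a}) (f : ι → M) :
    Measurable fun a => ∑ i ∈ R a, f i := by
  classical
  have : (fun a => ∑ i ∈ R a, f i) = fun a => ∑ i, {a | i ∈ R a}.indicator (fun _ => f i) a := by
    ext a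
    simp [Set.indicator, Finset.sum_ite_mem]
  rw [this]
  exact Finset.measurable_sum _ fun i _ => measurable_const.indicator (hR i)

theorem dependency_control_independent_case_general
    {Ω : Type*} [MeasurableSpace Ω] (P : Measure Ω) [IsProbabilityMeasure P]
    {ι : Type*} [Fintype ι]
    (H₀ : Finset ι) (Λ : ι → ℝ)
    (p : ι → Ω → ℝ) (hp : ∀ h, Measurable (p h))
    (hindep : iIndepFun p P)
    (hUnif : ∀ h ∈ H₀, ∀ t : ℝ, 0 ≤ t → t ≤ 1 →
      P {ω | p h ω ≤ t} ≤ ENNReal.ofReal t)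
    (R : (ι → ℝ) → Finset ι)
    (hRmeas : ∀ h, MeasurableSet {x : ι → ℝ | h ∈ R x})
    (hRmono : ∀ h ∈ H₀, ∀ x y : ι → ℝ, (∀ g, g ≠ h → x g = y g) → x h ≤ y h →
      (∑ g ∈ R y, Λ g) ≤ ∑ g ∈ R x, Λ g)
    (h : ι) (hh : h ∈ H₀) (c : ℝ) :
    ∫⁻ ω in {ω | p h ω ≤ c * (∑ g ∈ R (fun i => p i ω), Λ g)
        ∧ 0 < ∑ g ∈ R (fun i => p i ω), Λ g},
      ENNReal.ofReal (∑ g ∈ R (fun i => p i ω), Λ g)⁻¹ ∂P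
      ≤ ENNReal.ofReal c := by
  classical
  set V : (ι → ℝ) → ℝ := fun x => ∑ g ∈ R x, Λ g
  have hV : Measurable V := measurable_sum_of_measurableSet_mem hRmeas Λ
  set T := {x : ι → ℝ | x h ≤ c * V x ∧ 0 < V x}
  have hT : MeasurableSet T :=
    (measurableSet_le (measurable_pi_apply h) (hV.const_mul c)).inter
      (measurableSet_lt measurable_const hV)
  set F := T.indicator fun x => ENNReal.ofReal (V x)⁻¹
  have hsu : IsSuperUniform (P.map (p h)) := .of_le_on_unitInterval fun t ht₀ ht₁ => by
    rw [Measure.map_apply (hp h) measurableSet_Iic]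
    exact hUnif h hh t ht₀ ht₁
  calc _ = ∫⁻ ω, F (fun i => p i ω) ∂P :=
        (lintegral_indicator (measurable_pi_lambda _ hp hT) _).symm
    _ ≤ ENNReal.ofReal c := hindep.lintegral_comp_le_of_forall_lintegral_update_le hp
        (hV.inv.ennreal_ofReal.indicator hT) h fun x => ?_
  have hanti : Antitone fun t => V (Function.update x h t) := fun t s hts =>
    hRmono h hh _ _ (fun g hg => by simp [Function.update_of_ne hg]) (by simpa using hts)
  have hset : Function.update x h ⁻¹' T
      = {t | t ≤ c * V (Function.update x h t) ∧ 0 < V (Function.update x h t)} := by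
    ext t
    simp [T]
  calc ∫⁻ t, F (Function.update x h t) ∂P.map (p h)
      ≤ ∫⁻ t in Function.update x h ⁻¹' T, ENNReal.ofReal (V (Function.update x h t))⁻¹
          ∂P.map (p h) := lintegral_indicator_le _ _
    _ ≤ ENNReal.ofReal c := hset ▸ hsu.setLIntegral_inv_le hanti c

/-- Proposition 3.3: under independence of the `p`-values, if `|R(p)|` is
nonincreasing in each coordinate `p_h` with `h ∈ H₀`, then for every `h ∈ H₀`
the pair `(p_h, |R|)` satisfies the dependency control condition with linear
shape function. -/
theorem dependency_control_independent_case
    {Ω : Type*} [MeasurableSpace Ω] (P : Measure Ω) [IsProbabilityMeasure P]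
    {ι : Type*} [Fintype ι] [DecidableEq ι]
    (H₀ : Finset ι) (Λ : ι → ℝ) (hΛ : ∀ h, 0 < Λ h)
    (p : ι → Ω → ℝ) (hp : ∀ h, Measurable (p h))
    (hprange : ∀ h ω, p h ω ∈ Set.Icc (0:ℝ) 1)
    (hindep : iIndepFun p P)
    (hUnif : ∀ h ∈ H₀, ∀ t : ℝ, 0 ≤ t → t ≤ 1 →
      P {ω | p h ω ≤ t} ≤ ENNReal.ofReal t)
    (R : (ι → ℝ) → Finset ι)
    (hRmeas : ∀ h, MeasurableSet {x : ι → ℝ | h ∈ R x})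
    (hRmono : ∀ h ∈ H₀, ∀ x y : ι → ℝ, (∀ g, g ≠ h → x g = y g) → x h ≤ y h →
      (∑ g ∈ R y, Λ g) ≤ ∑ g ∈ R x, Λ g)
    (h : ι) (hh : h ∈ H₀) (c : ℝ) (hc : 0 < c) :
    ∫⁻ ω in {ω | p h ω ≤ c * (∑ g ∈ R (fun i => p i ω), Λ g)
        ∧ 0 < ∑ g ∈ R (fun i => p i ω), Λ g},
      ENNReal.ofReal (∑ g ∈ R (fun i => p i ω), Λ g)⁻¹ ∂P
      ≤ ENNReal.ofReal c :=
  dependency_control_independent_case_general P H₀ Λ p hp hindep hUnif R hRmeas hRmono h hh c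
end

section
/- (FDR control under arbitrary dependence.) Let H be a finite set, Λ : H → ℝ>0, π : H → [0,1], α > 0, ν a probability measure on (0,∞), and β_ν(r) = ∫_0^r x dν(x). Let (p_h)_{h∈H} be arbitrary [0,1]-valued random variables with P(p_h ≤ t) ≤ t for all t ∈ [0,1] and h ∈ H₀ (no independence or positive-dependence assumption). Let R be the step-up procedure associated to Δ(h,r) = α π(h) β_ν(r). Then FDR(R) ≤ α · Σ_{h∈H₀} Λ(h) π(h). -/
open MeasureTheory ENNReal Set Finset

/-!
The FDP is `Σ_{h ∈ R ∩ H₀} Λ(h) / |R|`, and for each such `h` the step-up fixed point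
`r̂ = |R|` gives `1 / |R| = 1 / r̂ = ∫_{r̂}^∞ u⁻² du ≤ ∫_0^∞ 1{p_h ≤ α π(h) β(u)} u⁻² du`, because `β` is
nondecreasing. The right-hand side no longer involves `R`, so Tonelli and super-uniformity of
`p_h` bound its expectation by `α π(h) ∫_0^∞ β(u) u⁻² du`, and swapping the integrals in
`β(u) = ∫_{(0,u]} x dν(x)` gives `∫_0^∞ β(u) u⁻² du = ν(0,∞) ≤ 1`.
-/

noncomputable def invSqMeasure : Measure ℝ :=
  (volume.restrict (Ioi 0)).withDensity fun u => ENNReal.ofReal (u ^ (-2 : ℝ))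

instance : SFinite invSqMeasure := by
  unfold invSqMeasure; infer_instance

lemma invSqMeasure_Ioi {r : ℝ} (hr : 0 < r) : invSqMeasure (Ioi r) = ENNReal.ofReal r⁻¹ := by
  rw [invSqMeasure, withDensity_apply _ measurableSet_Ioi,
    Measure.restrict_restrict measurableSet_Ioi, Ioi_inter_Ioi, sup_of_le_left hr.le,
    ← ofReal_integral_eq_lintegral_ofReal (integrableOn_Ioi_rpow_of_lt (by norm_num) hr)
      ((ae_restrict_mem measurableSet_Ioi).mono fun u hu => Real.rpow_nonneg (hr.trans hu).le _),
    integral_Ioi_rpow_of_lt (by norm_num) hr]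
  norm_num [Real.rpow_neg_one]

lemma invSqMeasure_Ici {r : ℝ} (hr : 0 < r) : invSqMeasure (Ici r) = ENNReal.ofReal r⁻¹ := by
  rw [← invSqMeasure_Ioi hr, invSqMeasure, withDensity_apply _ measurableSet_Ici,
    withDensity_apply _ measurableSet_Ioi]
  exact setLIntegral_congr
    (Measure.restrict_le_self.absolutelyContinuous.ae_eq Ioi_ae_eq_Ici).symm

lemma ofReal_inv_le_invSqMeasure {g : ℝ → ℝ} (hg : Monotone g) {r t : ℝ} (ht : t ≤ g r) :
    ENNReal.ofReal r⁻¹ ≤ invSqMeasure {u | t ≤ g u} := by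
  rcases le_or_gt r 0 with hr | hr
  · simp [ENNReal.ofReal_of_nonpos (inv_nonpos.2 hr)]
  · rw [← invSqMeasure_Ioi hr]
    exact measure_mono fun u hu => ht.trans (hg (le_of_lt hu))

lemma antitone_invSqMeasure_setOf_le {g : ℝ → ℝ} :
    Antitone fun t => invSqMeasure {u | t ≤ g u} := fun _ _ hst =>
  measure_mono fun _ hu => hst.trans hu

lemma measure_le_ofReal_of_forall_le_one {Ω : Type*} [MeasurableSpace Ω] {P : Measure Ω}
    [IsZeroOrProbabilityMeasure P] {U : Ω → ℝ}
    (hU : ∀ t : ℝ, 0 ≤ t → t ≤ 1 → P {ω | U ω ≤ t} ≤ ENNReal.ofReal t) {t : ℝ} (ht : 0 ≤ t) :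
    P {ω | U ω ≤ t} ≤ ENNReal.ofReal t := by
  rcases le_or_gt t 1 with ht1 | ht1
  · exact hU t ht ht1
  · exact prob_le_one.trans (ENNReal.one_le_ofReal.2 ht1.le)

lemma lintegral_measure_setOf_le_le {Ω : Type*} [MeasurableSpace Ω] {P : Measure Ω}
    [SFinite P] {μ : Measure ℝ} [SFinite μ] {U : Ω → ℝ} (hU : Measurable U)
    (hUnif : ∀ t : ℝ, 0 ≤ t → P {ω | U ω ≤ t} ≤ ENNReal.ofReal t)
    {g : ℝ → ℝ} (hg : Measurable g) (hg0 : ∀ u, 0 ≤ g u) :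
    ∫⁻ ω, μ {u | U ω ≤ g u} ∂P ≤ ∫⁻ u, ENNReal.ofReal (g u) ∂μ := by
  have hS : MeasurableSet {q : Ω × ℝ | U q.1 ≤ g q.2} :=
    measurableSet_le (hU.comp measurable_fst) (hg.comp measurable_snd)
  calc ∫⁻ ω, μ {u | U ω ≤ g u} ∂P = ∫⁻ u, P {ω | U ω ≤ g u} ∂μ :=
        (Measure.prod_apply hS).symm.trans (Measure.prod_apply_symm hS)
    _ ≤ ∫⁻ u, ENNReal.ofReal (g u) ∂μ := lintegral_mono fun u => hUnif _ (hg0 u)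

noncomputable def shapeFunction (ν : Measure ℝ) (r : ℝ) : ℝ := ∫ x in Ioc 0 r, x ∂ν

section shapeFunction

variable (ν : Measure ℝ)

lemma shapeFunction_nonneg (r : ℝ) : 0 ≤ shapeFunction ν r :=
  setIntegral_nonneg measurableSet_Ioc fun _ hx => hx.1.le

variable [IsLocallyFiniteMeasure ν]

lemma monotone_shapeFunction : Monotone (shapeFunction ν) := fun _ _ hrs =>
  setIntegral_mono_set continuous_id.integrableOn_Ioc
    ((ae_restrict_mem measurableSet_Ioc).mono fun _ hx => hx.1.le)
    (Ioc_subset_Ioc_right hrs).eventuallyLE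

lemma ofReal_shapeFunction (r : ℝ) :
    ENNReal.ofReal (shapeFunction ν r) = ∫⁻ x in Ioc 0 r, ENNReal.ofReal x ∂ν :=
  ofReal_integral_eq_lintegral_ofReal continuous_id.integrableOn_Ioc
    ((ae_restrict_mem measurableSet_Ioc).mono fun _ hx => hx.1.le)

lemma lintegral_ofReal_shapeFunction_invSqMeasure :
    ∫⁻ r, ENNReal.ofReal (shapeFunction ν r) ∂invSqMeasure = ν (Ioi 0) := by
  have hmeas : Measurable fun q : ℝ × ℝ => (Ioc 0 q.1).indicator ENNReal.ofReal q.2 :=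
    measurable_snd.ennreal_ofReal.indicator
      ((measurableSet_lt measurable_const measurable_snd).inter
        (measurableSet_le measurable_snd measurable_fst))
  calc ∫⁻ r, ENNReal.ofReal (shapeFunction ν r) ∂invSqMeasure
      = ∫⁻ r, ∫⁻ x, (Ioc 0 r).indicator ENNReal.ofReal x ∂ν ∂invSqMeasure := by
        simp_rw [ofReal_shapeFunction, lintegral_indicator measurableSet_Ioc]
    _ = ∫⁻ x, ∫⁻ r, (Ioc 0 r).indicator ENNReal.ofReal x ∂invSqMeasure ∂ν :=
        lintegral_lintegral_swap hmeas.aemeasurable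
    _ = ∫⁻ x, (Set.Ioi 0).indicator 1 x ∂ν := by
        congr 1; ext x
        rcases le_or_gt x 0 with hx | hx
        · simp [not_lt.2 hx]
        · have hsec : (fun r => (Ioc 0 r).indicator ENNReal.ofReal x)
              = (Ici x).indicator fun _ => ENNReal.ofReal x := by
            ext r; simp [indicator_apply, hx]
          rw [hsec, lintegral_indicator_const measurableSet_Ici, invSqMeasure_Ici hx,
            ← ENNReal.ofReal_mul hx.le, mul_inv_cancel₀ hx.ne']
          simp [hx]
    _ = ν (Ioi 0) := lintegral_indicator_one measurableSet_Ioi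

lemma lintegral_invSqMeasure_setOf_le_shapeFunction_le [IsZeroOrProbabilityMeasure ν]
    {Ω : Type*} [MeasurableSpace Ω] {P : Measure Ω} [IsZeroOrProbabilityMeasure P]
    {U : Ω → ℝ} (hU : Measurable U)
    (hUnif : ∀ t : ℝ, 0 ≤ t → t ≤ 1 → P {ω | U ω ≤ t} ≤ ENNReal.ofReal t) {c : ℝ} (hc : 0 ≤ c) :
    ∫⁻ ω, invSqMeasure {u | U ω ≤ c * shapeFunction ν u} ∂P ≤ ENNReal.ofReal c :=
  calc _ ≤ ∫⁻ u, ENNReal.ofReal (c * shapeFunction ν u) ∂invSqMeasure :=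
        lintegral_measure_setOf_le_le hU (fun _ => measure_le_ofReal_of_forall_le_one hUnif)
          ((monotone_shapeFunction ν).const_mul hc).measurable
          fun u => mul_nonneg hc (shapeFunction_nonneg ν u)
    _ = ENNReal.ofReal c * ν (Ioi 0) := by
        simp_rw [ENNReal.ofReal_mul hc]
        rw [lintegral_const_mul' _ _ ofReal_ne_top, lintegral_ofReal_shapeFunction_invSqMeasure]
    _ ≤ ENNReal.ofReal c := mul_le_of_le_one_right' prob_le_one

end shapeFunction

lemma Monotone.eq_apply_of_le_apply_of_forall_le {α : Type*} [PartialOrder α] {f : α → α}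
    (hf : Monotone f) {a r : α} (ha : a ≤ f r) (hr : r ≤ f r)
    (hmax : ∀ s, a ≤ s → s ≤ f s → s ≤ r) : r = f r :=
  le_antisymm hr (hmax _ ha (hf hr))

lemma monotone_sum_filter_le {ι : Type*} (s : Finset ι) {Λ : ι → ℝ} (hΛ : ∀ h, 0 ≤ Λ h)
    (x : ι → ℝ) {g : ι → ℝ → ℝ} (hg : ∀ h, Monotone (g h)) :
    Monotone fun r => ∑ h ∈ s.filter (fun h => x h ≤ g h r), Λ h := fun _ _ hrs =>
  sum_le_sum_of_subset_of_nonneg (monotone_filter_right s fun h _ hx => hx.trans (hg h hrs))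
    fun h _ _ => hΛ h

section weightedFDP

variable {ι : Type*} [DecidableEq ι]

noncomputable def weightedFDP (Λ : ι → ℝ) (H₀ R : Finset ι) : ℝ :=
  if 0 < ∑ g ∈ R, Λ g then (∑ g ∈ R ∩ H₀, Λ g) / (∑ g ∈ R, Λ g) else 0

lemma weightedFDP_eq_sum {Λ : ι → ℝ} (hΛ : ∀ h, 0 ≤ Λ h) (H₀ R : Finset ι) :
    weightedFDP Λ H₀ R = ∑ h ∈ R ∩ H₀, Λ h * (∑ g ∈ R, Λ g)⁻¹ := by
  rw [weightedFDP, ← sum_mul, ← div_eq_mul_inv]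
  split_ifs with hpos
  · rfl
  · simp [le_antisymm (not_lt.1 hpos) (sum_nonneg fun h _ => hΛ h)]

lemma ofReal_weightedFDP_le {Λ : ι → ℝ} (hΛ : ∀ h, 0 ≤ Λ h) {H₀ R : Finset ι} {G : ι → ℝ≥0∞}
    (hG : ∀ h ∈ R ∩ H₀, ENNReal.ofReal (∑ g ∈ R, Λ g)⁻¹ ≤ G h) :
    ENNReal.ofReal (weightedFDP Λ H₀ R) ≤ ∑ h ∈ H₀, ENNReal.ofReal (Λ h) * G h := by
  rw [weightedFDP_eq_sum hΛ, ENNReal.ofReal_sum_of_nonneg fun h _ =>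
    mul_nonneg (hΛ h) (inv_nonneg.2 (sum_nonneg fun g _ => hΛ g))]
  calc ∑ h ∈ R ∩ H₀, ENNReal.ofReal (Λ h * (∑ g ∈ R, Λ g)⁻¹)
      ≤ ∑ h ∈ R ∩ H₀, ENNReal.ofReal (Λ h) * G h := by
        refine sum_le_sum fun h hh => ?_
        rw [ENNReal.ofReal_mul (hΛ h)]
        gcongr
        exact hG h hh
    _ ≤ ∑ h ∈ H₀, ENNReal.ofReal (Λ h) * G h := sum_le_sum_of_subset inter_subset_right

end weightedFDP

theorem FDR_control_step_up_arbitrary_dependence_general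
    {Ω : Type*} [MeasurableSpace Ω] (P : Measure Ω) [IsProbabilityMeasure P]
    {ι : Type*} [Fintype ι] [DecidableEq ι]
    (H₀ : Finset ι) (Λ : ι → ℝ) (hΛ : ∀ h, 0 < Λ h)
    (π : ι → ℝ) (hπ : ∀ h, π h ∈ Set.Icc (0:ℝ) 1) (α : ℝ) (hα : 0 < α)
    (ν : Measure ℝ) [IsProbabilityMeasure ν]
    (β : ℝ → ℝ) (hβ : ∀ r : ℝ, β r = ∫ x in Set.Ioc 0 r, x ∂ν)
    (p : ι → Ω → ℝ) (hp : ∀ h, Measurable (p h))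
    (hUnif : ∀ h ∈ H₀, ∀ t : ℝ, 0 ≤ t → t ≤ 1 →
      P {ω | p h ω ≤ t} ≤ ENNReal.ofReal t)
    -- R is the step-up procedure for the threshold collection Δ(h,r) = α π(h) β_ν(r)
    (rhat : Ω → ℝ) (R : Ω → Finset ι)
    (hR : ∀ ω, R ω = Finset.univ.filter (fun h => p h ω ≤ α * π h * β (rhat ω)))
    (hrhatmem : ∀ ω, rhat ω ≤
      ∑ h ∈ Finset.univ.filter (fun h => p h ω ≤ α * π h * β (rhat ω)), Λ h)
    (hrhatmax : ∀ ω, ∀ r : ℝ, 0 ≤ r →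
      r ≤ ∑ h ∈ Finset.univ.filter (fun h => p h ω ≤ α * π h * β r), Λ h →
      r ≤ rhat ω) :
    ∫⁻ ω, ENNReal.ofReal
        (if 0 < ∑ g ∈ R ω, Λ g
          then (∑ g ∈ R ω ∩ H₀, Λ g) / (∑ g ∈ R ω, Λ g) else 0) ∂P
      ≤ ENNReal.ofReal (α * ∑ h ∈ H₀, Λ h * π h) := by
  obtain rfl : β = shapeFunction ν := funext hβ
  have hc h : 0 ≤ α * π h := mul_nonneg hα.le (hπ h).1
  have hthr h : Monotone fun r => α * π h * shapeFunction ν r :=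
    (monotone_shapeFunction ν).const_mul (hc h)
  have hrhat ω : rhat ω = ∑ g ∈ R ω, Λ g := by
    rw [hR]
    exact (monotone_sum_filter_le _ (fun h => (hΛ h).le) (p · ω) hthr)
      |>.eq_apply_of_le_apply_of_forall_le (sum_nonneg fun h _ => (hΛ h).le) (hrhatmem ω)
        (hrhatmax ω)
  set G : ι → Ω → ℝ≥0∞ := fun h ω => invSqMeasure {u | p h ω ≤ α * π h * shapeFunction ν u}
  have hFDP ω :
      ENNReal.ofReal (weightedFDP Λ H₀ (R ω)) ≤ ∑ h ∈ H₀, ENNReal.ofReal (Λ h) * G h ω :=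
    ofReal_weightedFDP_le (fun h => (hΛ h).le) fun h hh => by
      have hmem := (mem_inter.1 hh).1
      rw [hR, mem_filter] at hmem
      exact hrhat ω ▸ ofReal_inv_le_invSqMeasure (hthr h) hmem.2
  have hG h : Measurable (G h) :=
    (antitone_invSqMeasure_setOf_le (g := fun u => α * π h * shapeFunction ν u)).measurable.comp
      (hp h)
  calc ∫⁻ ω, ENNReal.ofReal (weightedFDP Λ H₀ (R ω)) ∂P
      ≤ ∑ h ∈ H₀, ENNReal.ofReal (Λ h) * ∫⁻ ω, G h ω ∂P := by
        refine (lintegral_mono hFDP).trans_eq ?_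
        rw [lintegral_finsetSum _ fun h _ => (hG h).const_mul _]
        exact sum_congr rfl fun h _ => lintegral_const_mul' _ _ ofReal_ne_top
    _ ≤ ∑ h ∈ H₀, ENNReal.ofReal (Λ h) * ENNReal.ofReal (α * π h) := by
        gcongr with h hh
        exact lintegral_invSqMeasure_setOf_le_shapeFunction_le ν (hp h) (hUnif h hh) (hc h)
    _ = ENNReal.ofReal (α * ∑ h ∈ H₀, Λ h * π h) := by
        rw [mul_sum, ENNReal.ofReal_sum_of_nonneg fun h _ =>
          mul_nonneg hα.le (mul_nonneg (hΛ h).le (hπ h).1)]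
        refine sum_congr rfl fun h _ => ?_
        rw [← ENNReal.ofReal_mul (hΛ h).le]
        ring_nf

/-- Theorem 4.2: under arbitrary (unspecified) dependence of the p-values, the
step-up procedure associated to the threshold collection
`Δ(h,r) = α π(h) β_ν(r)`, with `β_ν(r) = ∫_{(0,r]} x dν(x)` for a probability
measure `ν` on `(0,∞)`, has its Λ-weighted FDR bounded by
`α Σ_{h∈H₀} Λ(h) π(h)`. -/
theorem FDR_control_step_up_arbitrary_dependence
    {Ω : Type*} [MeasurableSpace Ω] (P : Measure Ω) [IsProbabilityMeasure P]
    {ι : Type*} [Fintype ι] [DecidableEq ι]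
    (H₀ : Finset ι) (Λ : ι → ℝ) (hΛ : ∀ h, 0 < Λ h)
    (π : ι → ℝ) (hπ : ∀ h, π h ∈ Set.Icc (0:ℝ) 1) (α : ℝ) (hα : 0 < α)
    (ν : Measure ℝ) [IsProbabilityMeasure ν] (hν : ν (Set.Iic 0) = 0)
    (β : ℝ → ℝ) (hβ : ∀ r : ℝ, β r = ∫ x in Set.Ioc 0 r, x ∂ν)
    (p : ι → Ω → ℝ) (hp : ∀ h, Measurable (p h))
    (hprange : ∀ h ω, p h ω ∈ Set.Icc (0:ℝ) 1)
    (hUnif : ∀ h ∈ H₀, ∀ t : ℝ, 0 ≤ t → t ≤ 1 →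
      P {ω | p h ω ≤ t} ≤ ENNReal.ofReal t)
    -- R is the step-up procedure for the threshold collection Δ(h,r) = α π(h) β_ν(r)
    (rhat : Ω → ℝ) (R : Ω → Finset ι)
    (hR : ∀ ω, R ω = Finset.univ.filter (fun h => p h ω ≤ α * π h * β (rhat ω)))
    (hrhat0 : ∀ ω, 0 ≤ rhat ω)
    (hrhatmem : ∀ ω, rhat ω ≤
      ∑ h ∈ Finset.univ.filter (fun h => p h ω ≤ α * π h * β (rhat ω)), Λ h)
    (hrhatmax : ∀ ω, ∀ r : ℝ, 0 ≤ r →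
      r ≤ ∑ h ∈ Finset.univ.filter (fun h => p h ω ≤ α * π h * β r), Λ h →
      r ≤ rhat ω) :
    ∫⁻ ω, ENNReal.ofReal
        (if 0 < ∑ g ∈ R ω, Λ g
          then (∑ g ∈ R ω ∩ H₀, Λ g) / (∑ g ∈ R ω, Λ g) else 0) ∂P
      ≤ ENNReal.ofReal (α * ∑ h ∈ H₀, Λ h * π h) :=
  FDR_control_step_up_arbitrary_dependence_general P H₀ Λ hΛ π hπ α hα ν β hβ p hp hUnif rhat R hR
    hrhatmem hrhatmax
end

section
/- (Hommel's inequality as a special case.) Let p_1, …, p_m be arbitrary [0,1]-valued random variables with P(p_i ≤ t) ≤ t for all t and all i (all hypotheses true). Let C_m = Σ_{i=1}^m 1/i. Let R = {i : p_i ≤ α i_max / (m C_m)} be the step-up procedure with threshold collection Δ(i,r) = α r/(m C_m): that is, with p_(1) ≤ … ≤ p_(m) the order statistics, r̂ = max{r ∈ {0,…,m} : p_(r) ≤ α r/(m C_m)} (p_(0)=0) and R rejects the r̂ smallest p-values. Then P(R ≠ ∅) ≤ α. -/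
/-!
Put `c = α / (m C_m)`. If `R ≠ ∅`, some `k ∈ [1, m]` has at least `k` p-values `≤ c k`.
Give the grid point `c x` the weight `w_x = 1/x - 1/(x+1)` (`x < m`), `w_m = 1/m`. Their tail
sums are `∑_{x ≥ k} w_x = 1/k`, so the score `s(t) = ∑_x w_x 1{t ≤ c x}` is at least `1/k`
when `t ≤ c k`, and `∑_i s(p_i) ≥ 1` on `{R ≠ ∅}`. By Markov's inequality and
super-uniformity, `P(R ≠ ∅) ≤ ∑_i E s(p_i) ≤ m ∑_x w_x c x = m c C_m = α`, where
`∑_x x w_x = C_m` is Abel summation.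
-/

open MeasureTheory ENNReal Finset

def SuperUniform {Ω : Type*} [MeasurableSpace Ω] (P : Measure Ω) (X : Ω → ℝ) : Prop :=
  ∀ t : ℝ, 0 ≤ t → t ≤ 1 → P {ω | X ω ≤ t} ≤ ENNReal.ofReal t

lemma SuperUniform.measure_le {Ω : Type*} [MeasurableSpace Ω] {P : Measure Ω}
    [IsProbabilityMeasure P] {X : Ω → ℝ} (hX : SuperUniform P X) {t : ℝ} (ht : 0 ≤ t) :
    P {ω | X ω ≤ t} ≤ ENNReal.ofReal t := by
  rcases le_total t 1 with ht1 | ht1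
  · exact hX t ht ht1
  · exact prob_le_one.trans (ofReal_one ▸ ofReal_le_ofReal ht1)

namespace Hommel

noncomputable section

def truncInv (m x : ℕ) : ℝ := if x ≤ m then (x : ℝ)⁻¹ else 0

def weight (m x : ℕ) : ℝ := truncInv m x - truncInv m (x + 1)

lemma weight_nonneg {m x : ℕ} (hx : 1 ≤ x) : 0 ≤ weight m x := by
  have hx₀ : (0 : ℝ) < x := by exact_mod_cast hx
  unfold weight truncInv
  split_ifs
  · exact sub_nonneg.2 (inv_anti₀ hx₀ (by push_cast; linarith))
  · simp [hx₀.le]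
  · omega
  · simp

lemma sum_Icc_weight {m k : ℕ} (hk : k ≤ m) :
    ∑ x ∈ Icc k m, weight m x = (k : ℝ)⁻¹ := by
  have htel := sum_Icc_sub hk (truncInv m)
  have htop : truncInv m (m + 1) = 0 := if_neg (by omega)
  have hbot : truncInv m k = (k : ℝ)⁻¹ := if_pos hk
  rw [sum_sub_distrib] at htel
  rw [← hbot]
  simp only [weight, sum_sub_distrib]
  linarith

lemma sum_Icc_natCast_mul_weight (m : ℕ) :
    ∑ x ∈ Icc 1 m, (x : ℝ) * weight m x = ∑ k ∈ Icc 1 m, (k : ℝ)⁻¹ :=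
  calc ∑ x ∈ Icc 1 m, (x : ℝ) * weight m x
      = ∑ x ∈ Icc 1 m, ∑ _k ∈ Icc 1 x, weight m x := by simp [sum_const]
    _ = ∑ k ∈ Icc 1 m, ∑ x ∈ Icc k m, weight m x :=
        sum_comm' fun x k => by simp only [mem_Icc]; omega
    _ = ∑ k ∈ Icc 1 m, (k : ℝ)⁻¹ :=
        sum_congr rfl fun k hk => sum_Icc_weight (mem_Icc.1 hk).2

def score (c : ℝ) (m : ℕ) (t : ℝ) : ℝ≥0∞ :=
  ∑ x ∈ Icc 1 m, (Set.Iic (c * x)).indicator (fun _ => ENNReal.ofReal (weight m x)) t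

lemma measurable_score (c : ℝ) (m : ℕ) : Measurable (score c m) :=
  Finset.measurable_sum _ fun _ _ => measurable_const.indicator measurableSet_Iic

lemma inv_le_score {c t : ℝ} {m k : ℕ} (hc : 0 ≤ c) (hk : 1 ≤ k) (hkm : k ≤ m)
    (ht : t ≤ c * k) : (k : ℝ≥0∞)⁻¹ ≤ score c m t :=
  calc (k : ℝ≥0∞)⁻¹ = ENNReal.ofReal (∑ x ∈ Icc k m, weight m x) := by
        rw [sum_Icc_weight hkm, ofReal_inv_of_pos (by exact_mod_cast hk), ofReal_natCast]
    _ = ∑ x ∈ Icc k m,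
          (Set.Iic (c * x)).indicator (fun _ => ENNReal.ofReal (weight m x)) t := by
        rw [ofReal_sum_of_nonneg fun x hx => weight_nonneg (hk.trans (mem_Icc.1 hx).1)]
        refine sum_congr rfl fun x hx =>
          (Set.indicator_of_mem ?_ fun _ => ENNReal.ofReal (weight m x)).symm
        exact ht.trans (mul_le_mul_of_nonneg_left (by exact_mod_cast (mem_Icc.1 hx).1) hc)
    _ ≤ score c m t := sum_le_sum_of_subset (Icc_subset_Icc_left hk)

lemma one_le_sum_score {ι : Type*} [Fintype ι] {q : ι → ℝ} {c : ℝ} {m k : ℕ} (hc : 0 ≤ c)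
    (hk : 1 ≤ k) (hkm : k ≤ m) (hcard : k ≤ #{i | q i ≤ c * k}) :
    1 ≤ ∑ i, score c m (q i) :=
  calc (1 : ℝ≥0∞) = k * (k : ℝ≥0∞)⁻¹ :=
        (ENNReal.mul_inv_cancel (by exact_mod_cast (by omega : k ≠ 0)) (natCast_ne_top k)).symm
    _ ≤ #{i | q i ≤ c * k} * (k : ℝ≥0∞)⁻¹ := by gcongr
    _ = ∑ i ∈ {i | q i ≤ c * k}, (k : ℝ≥0∞)⁻¹ := by rw [sum_const, nsmul_eq_mul]
    _ ≤ ∑ i ∈ {i | q i ≤ c * k}, score c m (q i) :=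
        sum_le_sum fun i hi => inv_le_score hc hk hkm (mem_filter.1 hi).2
    _ ≤ ∑ i, score c m (q i) := sum_le_sum_of_subset (subset_univ _)

lemma lintegral_score_le {Ω : Type*} [MeasurableSpace Ω] {P : Measure Ω} {X : Ω → ℝ}
    (hX : Measurable X) {c : ℝ} (hc : 0 ≤ c) (m : ℕ)
    (hsup : ∀ t, 0 ≤ t → P {ω | X ω ≤ t} ≤ ENNReal.ofReal t) :
    ∫⁻ ω, score c m (X ω) ∂P ≤ ENNReal.ofReal (c * ∑ k ∈ Icc 1 m, (k : ℝ)⁻¹) :=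
  calc ∫⁻ ω, score c m (X ω) ∂P
      = ∑ x ∈ Icc 1 m, ENNReal.ofReal (weight m x) * P {ω | X ω ≤ c * x} := by
        simp only [score]
        rw [lintegral_finsetSum _ fun x _ =>
          by exact (measurable_const.indicator measurableSet_Iic).comp hX]
        exact sum_congr rfl fun x _ => lintegral_indicator_const_comp hX measurableSet_Iic _
    _ ≤ ∑ x ∈ Icc 1 m, ENNReal.ofReal (weight m x) * ENNReal.ofReal (c * x) := by
        gcongr with x
        exact hsup _ (by positivity)
    _ = ∑ x ∈ Icc 1 m, ENNReal.ofReal (c * (x * weight m x)) :=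
      sum_congr rfl fun x hx => by
        rw [← ofReal_mul (weight_nonneg (mem_Icc.1 hx).1)]
        congr 1
        ring
    _ = ENNReal.ofReal (c * ∑ k ∈ Icc 1 m, (k : ℝ)⁻¹) := by
        rw [← sum_Icc_natCast_mul_weight, mul_sum, ofReal_sum_of_nonneg fun x hx => by
          have := weight_nonneg (m := m) (mem_Icc.1 hx).1
          positivity]

/-- Here `r` plays the role of `r̂`. For `r̂ = 0` the rejection set `{i | q i ≤ 0}` may still be
nonempty; any of its members makes the level `k = 1` work. -/
lemma exists_pos_le_card_filter_of_nonempty {ι : Type*} [Fintype ι] {q : ι → ℝ} {c : ℝ}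
    {r : ℕ} (hc : 0 ≤ c) (hr : r ≤ Fintype.card ι) (hrcard : r ≤ #{i | q i ≤ c * r})
    (hne : ({i | q i ≤ c * r} : Finset ι).Nonempty) :
    ∃ k, 1 ≤ k ∧ k ≤ Fintype.card ι ∧ k ≤ #{i | q i ≤ c * k} := by
  rcases Nat.eq_zero_or_pos r with rfl | hr₀
  · obtain ⟨i, hi⟩ := hne
    refine ⟨1, le_rfl, Fintype.card_pos_iff.2 ⟨i⟩, card_pos.2 ⟨i, ?_⟩⟩
    simp only [mem_filter, mem_univ, true_and, Nat.cast_zero, mul_zero, Nat.cast_one,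
      mul_one] at hi ⊢
    linarith
  · exact ⟨r, hr₀, hr, hrcard⟩

end

end Hommel

open Hommel in
theorem hommel_inequality_special_case_general
    {Ω : Type*} [MeasurableSpace Ω] (P : Measure Ω) [IsProbabilityMeasure P]
    (m : ℕ) (hm : 1 ≤ m) (α : ℝ) (hα : 0 < α)
    (p : Fin m → Ω → ℝ) (hp : ∀ i, Measurable (p i))
    (hUnif : ∀ i, ∀ t : ℝ, 0 ≤ t → t ≤ 1 →
      P {ω | p i ω ≤ t} ≤ ENNReal.ofReal t)
    (Cm : ℝ) (hCm : Cm = ∑ i ∈ Finset.Icc 1 m, (1 : ℝ) / i)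
    -- R is the step-up procedure with threshold collection Δ(i,r) = α r/(m C_m)
    (rhat : Ω → ℕ) (R : Ω → Finset (Fin m))
    (hR : ∀ ω, R ω = Finset.univ.filter
      (fun i => p i ω ≤ α * (rhat ω : ℝ) / (m * Cm)))
    (hrhatle : ∀ ω, rhat ω ≤ m)
    (hrhatmem : ∀ ω, rhat ω ≤ (Finset.univ.filter
      (fun i => p i ω ≤ α * (rhat ω : ℝ) / (m * Cm))).card) :
    P {ω | R ω ≠ ∅} ≤ ENNReal.ofReal α := by
  simp only [one_div] at hCm
  set c := α / (m * Cm)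
  have hCm_pos : 0 < Cm := hCm ▸ sum_pos (fun k hk => by
    have := (mem_Icc.1 hk).1
    positivity) (nonempty_Icc.2 hm)
  have hc : 0 ≤ c := by positivity
  have hthreshold : ∀ r : ℕ, α * r / (m * Cm) = c * r := fun r => mul_div_right_comm α r _
  have hscore : ∀ i, Measurable fun ω => score c m (p i ω) :=
    fun i => (measurable_score c m).comp (hp i)
  calc P {ω | R ω ≠ ∅}
      ≤ P {ω | 1 ≤ ∑ i, score c m (p i ω)} := measure_mono fun ω hω => by
        rw [Set.mem_ofPred_eq, hR ω, ← nonempty_iff_ne_empty] at hω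
        simp only [hthreshold] at hω hrhatmem
        obtain ⟨k, hk, hkm, hcard⟩ := exists_pos_le_card_filter_of_nonempty hc
          (by simpa using hrhatle ω) (hrhatmem ω) hω
        exact one_le_sum_score hc hk (by simpa using hkm) hcard
    _ ≤ ∫⁻ ω, ∑ i, score c m (p i ω) ∂P := by
        simpa using mul_meas_ge_le_lintegral₀
          (Finset.measurable_sum _ fun i _ => hscore i).aemeasurable 1
    _ = ∑ i, ∫⁻ ω, score c m (p i ω) ∂P := lintegral_finsetSum _ fun i _ => hscore i
    _ ≤ ∑ _i : Fin m, ENNReal.ofReal (c * Cm) := sum_le_sum fun i _ =>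
        hCm ▸ lintegral_score_le (hp i) hc m fun _ => SuperUniform.measure_le (hUnif i)
    _ = ENNReal.ofReal α := by
        rw [sum_const, card_univ, Fintype.card_fin, nsmul_eq_mul, ← ofReal_natCast,
          ← ofReal_mul (Nat.cast_nonneg m)]
        congr 1
        simp only [c]
        field_simp

/-- Hommel's inequality as a special case: if all `m` null hypotheses are true
and `R` is the step-up procedure with threshold collection
`Δ(i,r) = α r / (m C_m)` where `C_m = Σ_{i=1}^m 1/i`, then under arbitrary
dependence `P(R ≠ ∅) ≤ α`. -/
theorem hommel_inequality_special_case
    {Ω : Type*} [MeasurableSpace Ω] (P : Measure Ω) [IsProbabilityMeasure P]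
    (m : ℕ) (hm : 1 ≤ m) (α : ℝ) (hα : 0 < α)
    (p : Fin m → Ω → ℝ) (hp : ∀ i, Measurable (p i))
    (hprange : ∀ i ω, p i ω ∈ Set.Icc (0:ℝ) 1)
    (hUnif : ∀ i, ∀ t : ℝ, 0 ≤ t → t ≤ 1 →
      P {ω | p i ω ≤ t} ≤ ENNReal.ofReal t)
    (Cm : ℝ) (hCm : Cm = ∑ i ∈ Finset.Icc 1 m, (1 : ℝ) / i)
    -- R is the step-up procedure with threshold collection Δ(i,r) = α r/(m C_m)
    (rhat : Ω → ℕ) (R : Ω → Finset (Fin m))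
    (hR : ∀ ω, R ω = Finset.univ.filter
      (fun i => p i ω ≤ α * (rhat ω : ℝ) / (m * Cm)))
    (hrhatle : ∀ ω, rhat ω ≤ m)
    (hrhatmem : ∀ ω, rhat ω ≤ (Finset.univ.filter
      (fun i => p i ω ≤ α * (rhat ω : ℝ) / (m * Cm))).card)
    (hrhatmax : ∀ ω, ∀ r : ℕ, r ≤ m →
      r ≤ (Finset.univ.filter
        (fun i => p i ω ≤ α * (r : ℝ) / (m * Cm))).card → r ≤ rhat ω) :
    P {ω | R ω ≠ ∅} ≤ ENNReal.ofReal α :=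
  hommel_inequality_special_case_general P m hm α hα p hp hUnif Cm hCm rhat R hR hrhatle hrhatmem
end
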